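/- arXiv:2204.09990 — 2 statements merged into one kernel-verified Lean document; each statement's English description precedes it below -/
import Mathlib

section
/- Let g : (0,∞) → [0,∞) be a measurable function, 0 < α ≤ 1, and write G(t) = (1/t)∫₀ᵗ g*(s)^α ds where g* is the decreasing rearrangement of g with respect to Lebesgue measure. Then for all 0 < t, G(t) − G(2t) ≤ G(2t) − g*(2t)^α. -/
/-!
Write `h = g*^α`, which is antitone on `(0, ∞)` because `g*` is. Splitting
`∫₀^{2t} h = ∫₀^t h + ∫_t^{2t} h` and bounding the second piece below by `t h(2t)` gives
`∫₀^t h + t h(2t) ≤ ∫₀^{2t} h`; dividing by `t` is exactly the claimed inequality.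
-/

open MeasureTheory Set Real

/-- The decreasing rearrangement with respect to Lebesgue measure on `(0,∞)`. -/
noncomputable def rearr (g : ℝ → ℝ) (t : ℝ) : ℝ :=
  sInf {s : ℝ | 0 ≤ s ∧
    (volume.restrict (Set.Ioi (0:ℝ))) {x | s < |g x|} ≤ ENNReal.ofReal t}

open Filter Topology

theorem tendsto_measure_setOf_lt_atTop {α : Type*} [MeasurableSpace α] {μ : Measure α}
    {f : α → ℝ} (hf : AEMeasurable f μ) (hfin : ∃ s, μ {x | s < f x} ≠ ⊤) :
    Tendsto (fun s : ℝ => μ {x | s < f x}) atTop (𝓝 0) := by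
  have hempty : (⋂ s : ℝ, {x | s < f x}) = ∅ :=
    eq_empty_of_forall_notMem fun x hx => lt_irrefl (f x) (mem_iInter.1 hx (f x))
  simpa [hempty, Function.comp_def] using tendsto_measure_iInter_atTop
    (fun s => nullMeasurableSet_lt aemeasurable_const hf)
    (fun a b hab x (hx : b < f x) => (hab.trans_lt hx : a < f x)) hfin

theorem rearr_nonneg (g : ℝ → ℝ) (t : ℝ) : 0 ≤ rearr g t :=
  Real.sInf_nonneg fun _ hs => hs.1

theorem rearr_antitoneOn {g : ℝ → ℝ} (hg : Measurable g) : AntitoneOn (rearr g) (Ioi 0) := by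
  intro a ha b _ hab
  unfold rearr
  set μ := volume.restrict (Ioi (0:ℝ))
  have hsub : {s : ℝ | 0 ≤ s ∧ μ {x | s < |g x|} ≤ ENNReal.ofReal a} ⊆
      {s : ℝ | 0 ≤ s ∧ μ {x | s < |g x|} ≤ ENNReal.ofReal b} :=
    fun s hs => ⟨hs.1, hs.2.trans (ENNReal.ofReal_le_ofReal hab)⟩
  rcases eq_empty_or_nonempty {s : ℝ | 0 ≤ s ∧ μ {x | s < |g x|} ≤ ENNReal.ofReal b}
    with hb | ⟨s₀, hs₀, hμs₀⟩
  · rw [hb, subset_empty_iff.1 (hsub.trans hb.subset)]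
  · -- Since `μ {s₀ < |g|}` is finite, the level sets `{s < |g|}` have measure below `a` for large `s`.
    have hsmall : ∀ᶠ s in atTop, μ {x | s < |g x|} ≤ ENNReal.ofReal a :=
      (tendsto_measure_setOf_lt_atTop hg.abs.aemeasurable
        ⟨s₀, (hμs₀.trans_lt ENNReal.ofReal_lt_top).ne⟩).eventually_le_const
        (ENNReal.ofReal_pos.2 ha)
    obtain ⟨s, hs0, hs⟩ := ((eventually_ge_atTop 0).and hsmall).exists
    exact csInf_le_csInf ⟨0, fun _ h => h.1⟩ ⟨s, hs0, hs⟩ hsub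

theorem integral_add_mul_le_integral_two_mul {f : ℝ → ℝ} {t : ℝ} (ht : 0 ≤ t)
    (hf₀ : IntervalIntegrable f volume 0 t) (hf : AntitoneOn f (Icc t (2 * t))) :
    (∫ s in (0:ℝ)..t, f s) + t * f (2 * t) ≤ ∫ s in (0:ℝ)..(2 * t), f s := by
  have hle : t ≤ 2 * t := by linarith
  have hf₁ : IntervalIntegrable f volume t (2 * t) :=
    AntitoneOn.intervalIntegrable (by rwa [uIcc_of_le hle])
  have hlow : ∫ _ in t..(2 * t), f (2 * t) ≤ ∫ s in t..(2 * t), f s :=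
    intervalIntegral.integral_mono_on hle intervalIntegrable_const hf₁
      fun s hs => hf hs ⟨hle, le_rfl⟩ hs.2
  rw [intervalIntegral.integral_const, smul_eq_mul, show 2 * t - t = t by ring] at hlow
  rw [← intervalIntegral.integral_add_adjacent_intervals hf₀ hf₁]
  linarith

theorem average_sub_average_two_mul_le {f : ℝ → ℝ} {t : ℝ} (ht : 0 < t)
    (hf₀ : IntervalIntegrable f volume 0 t) (hf : AntitoneOn f (Icc t (2 * t))) :
    ((1 / t) * ∫ s in (0:ℝ)..t, f s) - ((1 / (2 * t)) * ∫ s in (0:ℝ)..(2 * t), f s) ≤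
      ((1 / (2 * t)) * ∫ s in (0:ℝ)..(2 * t), f s) - f (2 * t) := by
  have key := integral_add_mul_le_integral_two_mul ht.le hf₀ hf
  have hgap : ((1 / (2 * t)) * ∫ s in (0:ℝ)..(2 * t), f s) - f (2 * t) -
      (((1 / t) * ∫ s in (0:ℝ)..t, f s) - ((1 / (2 * t)) * ∫ s in (0:ℝ)..(2 * t), f s)) =
      ((∫ s in (0:ℝ)..(2 * t), f s) - ((∫ s in (0:ℝ)..t, f s) + t * f (2 * t))) / t := by
    field_simp
    ring
  linarith [div_nonneg (sub_nonneg.2 key) ht.le]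

theorem hardy_average_difference_le_general (g : ℝ → ℝ) (hg : Measurable g)
    (α : ℝ) (hα0 : 0 < α)
    (hint : ∀ t > (0:ℝ), IntervalIntegrable (fun s => rearr g s ^ α) volume 0 t)
    (t : ℝ) (ht : 0 < t) :
    ((1 / t) * ∫ s in (0:ℝ)..t, rearr g s ^ α) -
        ((1 / (2 * t)) * ∫ s in (0:ℝ)..(2 * t), rearr g s ^ α) ≤
      ((1 / (2 * t)) * ∫ s in (0:ℝ)..(2 * t), rearr g s ^ α) -
        rearr g (2 * t) ^ α := by
  have hanti : AntitoneOn (fun s => rearr g s ^ α) (Icc t (2 * t)) :=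
    fun a ha b hb hab => rpow_le_rpow (rearr_nonneg g b)
      (rearr_antitoneOn hg (ht.trans_le ha.1) (ht.trans_le hb.1) hab) hα0.le
  exact average_sub_average_two_mul_le ht (hint t ht) hanti

/-- with `G(t) = (1/t)∫₀ᵗ g*(s)^α ds`, one has
`G(t) − G(2t) ≤ G(2t) − g*(2t)^α` for all `t > 0`. -/
theorem hardy_average_difference_le (g : ℝ → ℝ) (hg : Measurable g)
    (hnn : ∀ s, 0 ≤ g s)
    (α : ℝ) (hα0 : 0 < α) (hα1 : α ≤ 1)
    (hint : ∀ t > (0:ℝ), IntervalIntegrable (fun s => rearr g s ^ α) volume 0 t)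
    (t : ℝ) (ht : 0 < t) :
    ((1 / t) * ∫ s in (0:ℝ)..t, rearr g s ^ α) -
        ((1 / (2 * t)) * ∫ s in (0:ℝ)..(2 * t), rearr g s ^ α) ≤
      ((1 / (2 * t)) * ∫ s in (0:ℝ)..(2 * t), rearr g s ^ α) -
        rearr g (2 * t) ^ α :=
  hardy_average_difference_le_general g hg α hα0 hint t ht
end

section
/- Let (Ω,d,μ) be a doubling metric measure space with doubling constant C_μ, let u : Ω → ℝ be measurable with a 1-gradient g ∈ L¹(μ) (i.e. |u(x) − u(y)| ≤ d(x,y)(g(x) + g(y)) for all x, y). Then for every t > 0, ∫_Ω (1/μ(B(x,t))) ∫_{B(x,t)} |u(x) − u(y)| dμ(y) dμ(x) ≤ t (1 + C_μ) ‖g‖_{L¹}. -/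
open MeasureTheory Metric Set TopologicalSpace
open scoped NNReal ENNReal

lemma doub_pow {Ω : Type*} [MetricSpace Ω] [MeasurableSpace Ω]
    (μ : Measure Ω) (Cμ : ℝ≥0)
    (hdoub : ∀ (x : Ω) (r : ℝ), 0 < r →
      μ (ball x (2 * r)) ≤ (Cμ : ℝ≥0∞) * μ (ball x r))
    (x : Ω) (r : ℝ) (hr : 0 < r) :
    ∀ k : ℕ, μ (ball x (2 ^ k * r)) ≤ ((Cμ : ℝ≥0∞)) ^ k * μ (ball x r) := by
  intro k
  induction k with
  | zero => simp
  | succ k ih =>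
      have h1 : (2 : ℝ) ^ (k + 1) * r = 2 * (2 ^ k * r) := by ring
      have h2 : (0 : ℝ) < 2 ^ k * r := by positivity
      calc μ (ball x (2 ^ (k + 1) * r)) = μ (ball x (2 * (2 ^ k * r))) := by rw [h1]
        _ ≤ (Cμ : ℝ≥0∞) * μ (ball x (2 ^ k * r)) := hdoub x _ h2
        _ ≤ (Cμ : ℝ≥0∞) * ((Cμ : ℝ≥0∞) ^ k * μ (ball x r)) := by
            exact mul_le_mul_right ih _
        _ = (Cμ : ℝ≥0∞) ^ (k + 1) * μ (ball x r) := by ring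

lemma sep_of_doubling {Ω : Type*} [MetricSpace Ω] [MeasurableSpace Ω]
    [OpensMeasurableSpace Ω]
    (μ : Measure Ω) (Cμ : ℝ≥0)
    (hpos : ∀ (x : Ω) (r : ℝ), 0 < r → 0 < μ (ball x r))
    (hfin : ∀ (x : Ω) (r : ℝ), 0 < r → μ (ball x r) < ⊤)
    (hdoub : ∀ (x : Ω) (r : ℝ), 0 < r →
      μ (ball x (2 * r)) ≤ (Cμ : ℝ≥0∞) * μ (ball x r)) :
    SeparableSpace Ω := by
  rcases isEmpty_or_nonempty Ω with hΩ | hΩ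
  · infer_instance
  obtain ⟨x₀⟩ := hΩ
  have htb : ∀ R : ℝ, 0 < R → TotallyBounded (ball x₀ R) := by
    intro R hR
    rw [Metric.totallyBounded_iff]
    by_contra hcon
    push_neg at hcon
    obtain ⟨ε, hε, hcov⟩ := hcon
    have key : ∀ s : Finset Ω, ∃ z, z ∈ ball x₀ R ∧ ∀ w ∈ s, ε ≤ dist z w := by
      intro s
      have := hcov (s : Set Ω) s.finite_toSet
      rw [Set.not_subset] at this
      obtain ⟨z, hz1, hz2⟩ := this
      refine ⟨z, hz1, fun w hw => ?_⟩
      by_contra hlt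
      push_neg at hlt
      exact hz2 (mem_biUnion hw (mem_ball.2 (by rwa [dist_comm] at hlt ⊢)))
    classical
    let pick : Finset Ω → Ω := fun s => (key s).choose
    let F : ℕ → Finset Ω := fun n => Nat.rec ∅ (fun _ s => insert (pick s) s) n
    have hF : ∀ n, F (n + 1) = insert (pick (F n)) (F n) := fun n => rfl
    let f : ℕ → Ω := fun n => pick (F n)
    have hmono : ∀ m n, m ≤ n → F m ⊆ F n := by
      intro m n h
      induction n with
      | zero => simp_all
      | succ n ih =>
          rcases Nat.lt_or_ge m (n + 1) with h' | h'
          · exact (ih (Nat.lt_succ_iff.mp h')).trans (by rw [hF]; exact Finset.subset_insert _ _)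
          · have : m = n + 1 := le_antisymm h h'
            simp [this]
    have hball : ∀ n, f n ∈ ball x₀ R := fun n => (key (F n)).choose_spec.1
    have hsep : ∀ m n, m < n → ε ≤ dist (f n) (f m) := by
      intro m n hmn
      have h1 : f m ∈ F (m + 1) := by rw [hF]; exact Finset.mem_insert_self _ _
      have h2 : f m ∈ F n := hmono _ _ hmn h1
      exact (key (F n)).choose_spec.2 _ h2
    -- lower bound on small balls
    obtain ⟨k, hk⟩ := pow_unbounded_of_one_lt (2 * R / (ε / 2)) (by norm_num : (1:ℝ) < 2)
    have hk' : 2 * R < 2 ^ k * (ε / 2) := by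
      rw [div_lt_iff₀ (by linarith : (0:ℝ) < ε / 2)] at hk
      linarith
    set c : ℝ≥0∞ := ((Cμ : ℝ≥0∞) ^ k)⁻¹ * μ (ball x₀ R) with hc
    have hCk0 : ((Cμ : ℝ≥0∞) ^ k) ≠ 0 := by
      apply pow_ne_zero
      intro h
      rw [ENNReal.coe_eq_zero] at h
      have := hpos x₀ R hR
      have h2R : (0:ℝ) < 2 * R := by linarith
      have := hdoub x₀ R hR
      simp [h] at this
      exact absurd this (hpos x₀ (2*R) h2R).ne'
    have hCkt : ((Cμ : ℝ≥0∞) ^ k) ≠ ⊤ := by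
      exact (ENNReal.pow_ne_top ENNReal.coe_ne_top)
    have hc0 : 0 < c := by
      apply ENNReal.mul_pos
      · exact ENNReal.inv_ne_zero.2 hCkt
      · exact (hpos x₀ R hR).ne'
    have hlow : ∀ n, c ≤ μ (ball (f n) (ε / 2)) := by
      intro n
      have hsub : ball x₀ R ⊆ ball (f n) (2 ^ k * (ε / 2)) := by
        intro z hz
        have h1 : dist z (f n) ≤ dist z x₀ + dist x₀ (f n) := dist_triangle _ _ _
        have h2 := mem_ball.1 hz
        have h3 := mem_ball.1 (hball n)
        rw [mem_ball]
        rw [dist_comm] at h3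
        calc dist z (f n) ≤ dist z x₀ + dist x₀ (f n) := h1
          _ < R + R := by linarith
          _ < 2 ^ k * (ε / 2) := by linarith
      calc c = ((Cμ : ℝ≥0∞) ^ k)⁻¹ * μ (ball x₀ R) := hc
        _ ≤ ((Cμ : ℝ≥0∞) ^ k)⁻¹ * μ (ball (f n) (2 ^ k * (ε / 2))) :=
            mul_le_mul_right (measure_mono hsub) _
        _ ≤ ((Cμ : ℝ≥0∞) ^ k)⁻¹ * ((Cμ : ℝ≥0∞) ^ k * μ (ball (f n) (ε / 2))) :=
            mul_le_mul_right (doub_pow μ Cμ hdoub (f n) (ε / 2) (by linarith) k) _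
        _ = μ (ball (f n) (ε / 2)) := by
            rw [← mul_assoc, ENNReal.inv_mul_cancel hCk0 hCkt, one_mul]
    set M : ℝ≥0∞ := μ (ball x₀ (R + ε / 2)) with hM
    have hMfin : M ≠ ⊤ := (hfin x₀ (R + ε / 2) (by linarith)).ne
    have hNc : ∀ N : ℕ, (N : ℝ≥0∞) * c ≤ M := by
      intro N
      have hdisj : ∀ m ∈ Finset.range N, ∀ n ∈ Finset.range N, m ≠ n →
          Disjoint (ball (f m) (ε / 2)) (ball (f n) (ε / 2)) := by
        intro m _ n _ hmn
        rcases lt_or_gt_of_ne hmn with h | h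
        · exact ball_disjoint_ball (by rw [dist_comm]; linarith [hsep m n h])
        · exact ball_disjoint_ball (by linarith [hsep n m h])
      have hsum : ∑ n ∈ Finset.range N, μ (ball (f n) (ε / 2))
          = μ (⋃ n ∈ Finset.range N, ball (f n) (ε / 2)) :=
        (measure_biUnion_finset hdisj (fun n _ => measurableSet_ball)).symm
      have hsub : (⋃ n ∈ Finset.range N, ball (f n) (ε / 2)) ⊆ ball x₀ (R + ε / 2) := by
        intro z hz
        simp only [mem_iUnion] at hz
        obtain ⟨n, _, hz⟩ := hz
        have h1 := mem_ball.1 hz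
        have h2 := mem_ball.1 (hball n)
        rw [mem_ball]
        calc dist z x₀ ≤ dist z (f n) + dist (f n) x₀ := dist_triangle _ _ _
          _ < ε / 2 + R := by linarith
          _ = R + ε / 2 := by ring
      calc (N : ℝ≥0∞) * c = ∑ _n ∈ Finset.range N, c := by
            simp [Finset.sum_const, nsmul_eq_mul]
        _ ≤ ∑ n ∈ Finset.range N, μ (ball (f n) (ε / 2)) :=
            Finset.sum_le_sum (fun n _ => hlow n)
        _ = μ (⋃ n ∈ Finset.range N, ball (f n) (ε / 2)) := hsum
        _ ≤ M := measure_mono hsub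
    have hcfin : c ≠ ⊤ := by
      apply ENNReal.mul_ne_top
      · exact ENNReal.inv_ne_top.2 hCk0
      · exact (hfin x₀ R hR).ne
    obtain ⟨N, hN⟩ := ENNReal.exists_nat_gt (ENNReal.div_lt_top hMfin hc0.ne').ne
    have : M < (N : ℝ≥0∞) * c := by
      rwa [ENNReal.div_lt_iff (Or.inl hc0.ne') (Or.inl hcfin)] at hN
    exact absurd (hNc N) (not_le.2 this)
  have huniv : (univ : Set Ω) = ⋃ n : ℕ, ball x₀ (n + 1) := by
    ext z
    simp only [mem_univ, mem_iUnion, mem_ball, true_iff]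
    obtain ⟨n, hn⟩ := exists_nat_gt (dist z x₀)
    exact ⟨n, by push_cast; linarith⟩
  have : IsSeparable (univ : Set Ω) := by
    rw [huniv]
    exact .iUnion fun n => (htb (n + 1) (by positivity)).isSeparable
  exact isSeparable_univ_iff.mp this

/-- if `g ∈ L¹(μ)` is a 1-gradient of `u`, i.e.
`|u(x) − u(y)| ≤ d(x,y)(g(x) + g(y))`, then in a doubling metric measure space
with constant `C_μ`, for every `t > 0`,
`∫ (1/μ(B(x,t))) ∫_{B(x,t)} |u(x) − u(y)| dμ(y) dμ(x) ≤ t (1 + C_μ) ‖g‖₁`. -/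
theorem modulus_gradient_bound {Ω : Type*} [MetricSpace Ω] [MeasurableSpace Ω]
    [OpensMeasurableSpace Ω]
    (μ : Measure Ω) (Cμ : ℝ≥0) (hC : 1 < Cμ)
    (hpos : ∀ (x : Ω) (r : ℝ), 0 < r → 0 < μ (ball x r))
    (hfin : ∀ (x : Ω) (r : ℝ), 0 < r → μ (ball x r) < ⊤)
    (hdoub : ∀ (x : Ω) (r : ℝ), 0 < r →
      μ (ball x (2 * r)) ≤ (Cμ : ℝ≥0∞) * μ (ball x r))
    (u : Ω → ℝ) (hu : Measurable u)
    (g : Ω → ℝ) (hg : Measurable g) (hgnn : ∀ x, 0 ≤ g x)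
    (hg1 : Integrable g μ)
    (hgrad : ∀ x y : Ω, |u x - u y| ≤ dist x y * (g x + g y))
    (t : ℝ) (ht : 0 < t) :
    ∫⁻ x, (μ (ball x t))⁻¹ *
        ∫⁻ y in ball x t, ENNReal.ofReal |u x - u y| ∂μ ∂μ ≤
      ENNReal.ofReal t * (1 + (Cμ : ℝ≥0∞)) * ∫⁻ x, ENNReal.ofReal (g x) ∂μ := by
  haveI : SeparableSpace Ω := sep_of_doubling μ Cμ hpos hfin hdoub
  haveI : SecondCountableTopology Ω := UniformSpace.secondCountable_of_separable Ω
  rcases isEmpty_or_nonempty Ω with hΩ | hΩ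
  · simp [μ.eq_zero_of_isEmpty]
  obtain ⟨x₀⟩ := hΩ
  haveI : SigmaFinite μ := by
    refine ⟨⟨⟨fun n => ball x₀ (n + 1), fun _ => trivial,
      fun n => hfin x₀ (n + 1) (by positivity), ?_⟩⟩⟩
    ext z
    simp only [mem_iUnion, mem_ball, mem_univ, iff_true]
    obtain ⟨n, hn⟩ := exists_nat_gt (dist z x₀)
    exact ⟨n, by linarith⟩
  set S : Set (Ω × Ω) := {p : Ω × Ω | dist p.1 p.2 < t} with hSdef
  have hS : MeasurableSet S := measurableSet_lt measurable_dist measurable_const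
  have hball_eq : ∀ x : Ω, Prod.mk x ⁻¹' S = ball x t := by
    intro x; ext y
    simp [hSdef, mem_ball, dist_comm]
  have hmB : Measurable fun x => μ (ball x t) := by
    simpa [hball_eq] using measurable_measure_prodMk_left (ν := μ) hS
  set I := ∫⁻ x, ENNReal.ofReal (g x) ∂μ with hI
  have hgm : Measurable fun y => ENNReal.ofReal (g y) := hg.ennreal_ofReal
  have hmem : ∀ x y : Ω, (x, y) ∈ S ↔ y ∈ ball x t := by
    intro x y; simp [hSdef, mem_ball, dist_comm]
  have hmem' : ∀ x y : Ω, (x, y) ∈ S ↔ x ∈ ball y t := by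
    intro x y; simp [hSdef, mem_ball]
  -- pointwise bound
  have step1 : ∀ x, (μ (ball x t))⁻¹ * ∫⁻ y in ball x t, ENNReal.ofReal |u x - u y| ∂μ
      ≤ ENNReal.ofReal t * (ENNReal.ofReal (g x)
          + (μ (ball x t))⁻¹ * ∫⁻ y in ball x t, ENNReal.ofReal (g y) ∂μ) := by
    intro x
    have hne : μ (ball x t) ≠ 0 := (hpos x t ht).ne'
    have hnetop : μ (ball x t) ≠ ⊤ := (hfin x t ht).ne
    have hptwise : ∀ y ∈ ball x t, ENNReal.ofReal |u x - u y|
        ≤ ENNReal.ofReal t * (ENNReal.ofReal (g x) + ENNReal.ofReal (g y)) := by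
      intro y hy
      have hd : dist x y < t := by rw [dist_comm]; exact mem_ball.1 hy
      have h1 : |u x - u y| ≤ t * (g x + g y) := by
        have h2 := hgrad x y
        nlinarith [hgnn x, hgnn y, dist_nonneg (x := x) (y := y)]
      calc ENNReal.ofReal |u x - u y| ≤ ENNReal.ofReal (t * (g x + g y)) :=
            ENNReal.ofReal_le_ofReal h1
        _ = ENNReal.ofReal t * (ENNReal.ofReal (g x) + ENNReal.ofReal (g y)) := by
            rw [ENNReal.ofReal_mul ht.le, ENNReal.ofReal_add (hgnn x) (hgnn y)]
    have hinner : ∫⁻ y in ball x t, ENNReal.ofReal |u x - u y| ∂μ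
        ≤ ENNReal.ofReal t * (μ (ball x t) * ENNReal.ofReal (g x)
            + ∫⁻ y in ball x t, ENNReal.ofReal (g y) ∂μ) := by
      calc ∫⁻ y in ball x t, ENNReal.ofReal |u x - u y| ∂μ
          ≤ ∫⁻ y in ball x t,
              ENNReal.ofReal t * (ENNReal.ofReal (g x) + ENNReal.ofReal (g y)) ∂μ :=
            setLIntegral_mono (by fun_prop) hptwise
        _ = ENNReal.ofReal t * (μ (ball x t) * ENNReal.ofReal (g x)
              + ∫⁻ y in ball x t, ENNReal.ofReal (g y) ∂μ) := by
            rw [lintegral_const_mul _ (f := fun y => ENNReal.ofReal (g x) + ENNReal.ofReal (g y)) (measurable_const.add hgm),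
              lintegral_add_left measurable_const, setLIntegral_const]
            ring
    calc (μ (ball x t))⁻¹ * ∫⁻ y in ball x t, ENNReal.ofReal |u x - u y| ∂μ
        ≤ (μ (ball x t))⁻¹ * (ENNReal.ofReal t * (μ (ball x t) * ENNReal.ofReal (g x)
            + ∫⁻ y in ball x t, ENNReal.ofReal (g y) ∂μ)) := mul_le_mul_right hinner _
      _ = ENNReal.ofReal t * ((μ (ball x t))⁻¹ * (μ (ball x t) * ENNReal.ofReal (g x))
            + (μ (ball x t))⁻¹ * ∫⁻ y in ball x t, ENNReal.ofReal (g y) ∂μ) := by ring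
      _ = ENNReal.ofReal t * (ENNReal.ofReal (g x)
            + (μ (ball x t))⁻¹ * ∫⁻ y in ball x t, ENNReal.ofReal (g y) ∂μ) := by
          rw [← mul_assoc, ENNReal.inv_mul_cancel hne hnetop, one_mul]
  -- measurability of inner integrals
  have hJeq : ∀ x, ∫⁻ y in ball x t, ENNReal.ofReal (g y) ∂μ
      = ∫⁻ y, (S.indicator fun p => ENNReal.ofReal (g p.2)) (x, y) ∂μ := by
    intro x
    rw [← lintegral_indicator measurableSet_ball]
    congr 1
    ext y
    by_cases h : y ∈ ball x t
    · have hs : (x, y) ∈ S := (hmem x y).2 h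
      simp [indicator, h, hs]
    · have hs : (x, y) ∉ S := fun h' => h ((hmem x y).1 h')
      simp [indicator, h, hs]
  have hJm : Measurable fun x => ∫⁻ y in ball x t, ENNReal.ofReal (g y) ∂μ := by
    simp_rw [hJeq]
    exact ((hgm.comp measurable_snd).indicator hS).lintegral_prod_right'
  set D := ∫⁻ x, (μ (ball x t))⁻¹ * ∫⁻ y in ball x t, ENNReal.ofReal (g y) ∂μ ∂μ with hD
  -- step 2 : integrate
  have step2 : ∫⁻ x, (μ (ball x t))⁻¹ *
      ∫⁻ y in ball x t, ENNReal.ofReal |u x - u y| ∂μ ∂μ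
      ≤ ENNReal.ofReal t * (I + D) := by
    calc ∫⁻ x, (μ (ball x t))⁻¹ * ∫⁻ y in ball x t, ENNReal.ofReal |u x - u y| ∂μ ∂μ
        ≤ ∫⁻ x, ENNReal.ofReal t * (ENNReal.ofReal (g x)
            + (μ (ball x t))⁻¹ * ∫⁻ y in ball x t, ENNReal.ofReal (g y) ∂μ) ∂μ :=
          lintegral_mono step1
      _ = ENNReal.ofReal t * (I + D) := by
          rw [lintegral_const_mul _ (f := fun x => ENNReal.ofReal (g x) + (μ (ball x t))⁻¹ * ∫⁻ y in ball x t, ENNReal.ofReal (g y) ∂μ) (hgm.add (hmB.inv.mul hJm)),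
            lintegral_add_left hgm]
  -- Tonelli for D
  set f : Ω → Ω → ℝ≥0∞ := fun x y =>
    (S.indicator fun p => (μ (ball p.1 t))⁻¹ * ENNReal.ofReal (g p.2)) (x, y) with hf
  have hfmeas : Measurable (Function.uncurry f) := by
    have : Function.uncurry f
        = S.indicator fun p => (μ (ball p.1 t))⁻¹ * ENNReal.ofReal (g p.2) := rfl
    rw [this]
    exact ((hmB.inv.comp measurable_fst).mul (hgm.comp measurable_snd)).indicator hS
  have hDeq1 : ∀ x, ∫⁻ y, f x y ∂μ
      = (μ (ball x t))⁻¹ * ∫⁻ y in ball x t, ENNReal.ofReal (g y) ∂μ := by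
    intro x
    have heq : ∀ y, f x y = (ball x t).indicator
        (fun y => (μ (ball x t))⁻¹ * ENNReal.ofReal (g y)) y := by
      intro y
      by_cases h : y ∈ ball x t
      · have hs : (x, y) ∈ S := (hmem x y).2 h
        simp [hf, indicator, h, hs]
      · have hs : (x, y) ∉ S := fun h' => h ((hmem x y).1 h')
        simp [hf, indicator, h, hs]
    simp_rw [heq]
    rw [lintegral_indicator measurableSet_ball, lintegral_const_mul _ hgm]
  have hDeq : D = ∫⁻ x, ∫⁻ y, f x y ∂μ ∂μ := by
    rw [hD]
    exact lintegral_congr fun x => (hDeq1 x).symm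
  have hswap : ∫⁻ x, ∫⁻ y, f x y ∂μ ∂μ = ∫⁻ y, ∫⁻ x, f x y ∂μ ∂μ :=
    lintegral_lintegral_swap hfmeas.aemeasurable
  have hKbound : ∀ y : Ω, ∫⁻ x in ball y t, (μ (ball x t))⁻¹ ∂μ ≤ (Cμ : ℝ≥0∞) := by
    intro y
    have hne : μ (ball y t) ≠ 0 := (hpos y t ht).ne'
    have hnetop : μ (ball y t) ≠ ⊤ := (hfin y t ht).ne
    have hb : ∀ x ∈ ball y t, (μ (ball x t))⁻¹ ≤ (Cμ : ℝ≥0∞) * (μ (ball y t))⁻¹ := by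
      intro x hx
      have hsub : ball y t ⊆ ball x (2 * t) := by
        intro z hz
        rw [mem_ball] at hz ⊢
        have hxy : dist x y < t := mem_ball.1 hx
        calc dist z x ≤ dist z y + dist y x := dist_triangle _ _ _
          _ < t + t := by rw [dist_comm y x]; linarith
          _ = 2 * t := by ring
      have h1 : μ (ball y t) ≤ (Cμ : ℝ≥0∞) * μ (ball x t) :=
        (measure_mono hsub).trans (hdoub x t ht)
      have h2 : μ (ball y t) * ((Cμ : ℝ≥0∞))⁻¹ ≤ μ (ball x t) := by
        rw [← div_eq_mul_inv]
        exact ENNReal.div_le_of_le_mul' h1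
      calc (μ (ball x t))⁻¹ ≤ (μ (ball y t) * ((Cμ : ℝ≥0∞))⁻¹)⁻¹ :=
            ENNReal.inv_le_inv' h2
        _ = (Cμ : ℝ≥0∞) * (μ (ball y t))⁻¹ := by
            rw [ENNReal.mul_inv (Or.inl hne) (Or.inl hnetop), inv_inv, mul_comm]
    calc ∫⁻ x in ball y t, (μ (ball x t))⁻¹ ∂μ
        ≤ ∫⁻ _x in ball y t, (Cμ : ℝ≥0∞) * (μ (ball y t))⁻¹ ∂μ :=
          setLIntegral_mono (by fun_prop) hb
      _ = (Cμ : ℝ≥0∞) * (μ (ball y t))⁻¹ * μ (ball y t) := setLIntegral_const _ _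
      _ = (Cμ : ℝ≥0∞) := by rw [mul_assoc, ENNReal.inv_mul_cancel hne hnetop, mul_one]
  have hDle : D ≤ (Cμ : ℝ≥0∞) * I := by
    rw [hDeq, hswap]
    have hinnerx : ∀ y : Ω, ∫⁻ x, f x y ∂μ
        = ENNReal.ofReal (g y) * ∫⁻ x in ball y t, (μ (ball x t))⁻¹ ∂μ := by
      intro y
      have heq : ∀ x, f x y = (ball y t).indicator
          (fun x => (μ (ball x t))⁻¹ * ENNReal.ofReal (g y)) x := by
        intro x
        by_cases h : x ∈ ball y t
        · have hs : (x, y) ∈ S := (hmem' x y).2 h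
          simp [hf, indicator, h, hs]
        · have hs : (x, y) ∉ S := fun h' => h ((hmem' x y).1 h')
          simp [hf, indicator, h, hs]
      simp_rw [heq]
      rw [lintegral_indicator measurableSet_ball, lintegral_mul_const _ (f := fun x => (μ (ball x t))⁻¹) hmB.inv, mul_comm]
    calc ∫⁻ y, ∫⁻ x, f x y ∂μ ∂μ
        = ∫⁻ y, ENNReal.ofReal (g y) * ∫⁻ x in ball y t, (μ (ball x t))⁻¹ ∂μ ∂μ := by
          simp_rw [hinnerx]
      _ ≤ ∫⁻ y, ENNReal.ofReal (g y) * (Cμ : ℝ≥0∞) ∂μ :=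
          lintegral_mono fun y => mul_le_mul_right (hKbound y) _
      _ = (Cμ : ℝ≥0∞) * I := by rw [lintegral_mul_const _ hgm, mul_comm]
  calc ∫⁻ x, (μ (ball x t))⁻¹ * ∫⁻ y in ball x t, ENNReal.ofReal |u x - u y| ∂μ ∂μ
      ≤ ENNReal.ofReal t * (I + D) := step2
    _ ≤ ENNReal.ofReal t * (I + (Cμ : ℝ≥0∞) * I) :=
        mul_le_mul_right (add_le_add_right hDle _) _
    _ = ENNReal.ofReal t * (1 + (Cμ : ℝ≥0∞)) * I := by ring
end
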